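/- For the Shiriyayev–Roberts–Robbins–Siegmund changepoint detection scheme based on the maximum likelihood estimators, E_∞ N_A ≥ A for all 0 < A < ∞. -/

import Mathlib

/-!
Under `P_∞` the process `R_n - n` is a martingale. Indeed
`R_{n+1} = ∑_{k ≤ n+1} Λ_{k,n} · f_{θ_{k,n+1}}(X_{n+1}) / f_{θ₀}(X_{n+1})` with `Λ_{n+1,n} = 1`,
and `Λ_{k,n}`, `θ_{k,n+1}` are functions of `X_1, …, X_n`, which are independent of
`X_{n+1} ~ Gamma(θ₀, 1)`; so each density ratio integrates to one against any event of the past.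
Applied to the past events `{N_A ≥ n + 1}` and summed over `n`, this is optional stopping:
as `R_{N_A} ≥ A`, it gives `A · P(N_A < ∞) ≤ ∑_n P(N_A > n) ≤ E_∞ N_A`, and if
`P(N_A = ∞) > 0` then `E_∞ N_A = ∞` anyway.
-/

open MeasureTheory ProbabilityTheory Filter
open scoped ENNReal NNReal

noncomputable section

/-- The Gamma(θ,1) density. -/
def gam (θ x : ℝ) : ℝ := gammaPDFReal θ 1 x

/-- The digamma function `ψ(θ) = d(log Γ(θ))/dθ`. -/
def digamma (x : ℝ) : ℝ := deriv (fun y => Real.log (Real.Gamma y)) x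

@[fun_prop]
theorem Real.measurable_Gamma : Measurable Real.Gamma := by
  refine measurable_of_countable_not_continuousAt <|
    (Set.countable_range fun m : ℕ => -(m : ℝ)).mono fun x hx => ?_
  by_contra h
  exact hx (Real.differentiableAt_Gamma fun m hm => h ⟨m, hm.symm⟩).continuousAt

theorem measurable_gam : Measurable (Function.uncurry gam) := by
  unfold gam gammaPDFReal
  refine Measurable.ite (measurableSet_le measurable_const measurable_snd) ?_ measurable_const
  fun_prop

def gamRatio (θ₀ θ x : ℝ) : ℝ := gam θ x / gam θ₀ x

theorem gamRatio_nonneg {θ₀ θ : ℝ} (hθ₀ : 0 < θ₀) (hθ : 0 < θ) (x : ℝ) : 0 ≤ gamRatio θ₀ θ x :=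
  div_nonneg (gammaPDFReal_nonneg hθ one_pos x) (gammaPDFReal_nonneg hθ₀ one_pos x)

theorem measurable_gamRatio (θ₀ : ℝ) : Measurable (Function.uncurry (gamRatio θ₀)) :=
  measurable_gam.div (measurable_gam.comp (measurable_const.prodMk measurable_snd))

theorem lintegral_gamRatio {θ₀ θ : ℝ} (hθ₀ : 0 < θ₀) (hθ : 0 < θ) :
    ∫⁻ x, ENNReal.ofReal (gamRatio θ₀ θ x) ∂gammaMeasure θ₀ 1 = 1 := by
  have hratio : Measurable fun x => ENNReal.ofReal (gamRatio θ₀ θ x) :=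
    ((measurable_gammaPDFReal θ 1).div (measurable_gammaPDFReal θ₀ 1)).ennreal_ofReal
  rw [gammaMeasure, lintegral_withDensity_eq_lintegral_mul _ (f := gammaPDF θ₀ 1)
    (measurable_gammaPDFReal θ₀ 1).ennreal_ofReal hratio, ← lintegral_gammaPDF_eq_one hθ one_pos]
  -- at `x = 0` the density `gam θ₀` may vanish while `gam θ` does not
  refine lintegral_congr_ae ((volume.ae_ne 0).mono fun x hx => ?_)
  rcases hx.lt_or_gt with hneg | hpos
  · simp only [Pi.mul_apply, gammaPDF_of_neg hneg, zero_mul]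
  · have h₀ : 0 < gam θ₀ x := gammaPDFReal_pos hθ₀ one_pos hpos
    rw [Pi.mul_apply, gammaPDF, gammaPDF, gamRatio, ← gam, ← ENNReal.ofReal_mul h₀.le,
      mul_div_cancel₀ _ h₀.ne', gam]

theorem digamma_monotoneOn : MonotoneOn digamma (Set.Ioi 0) :=
  Real.convexOn_log_Gamma.monotoneOn_deriv fun x (hx : 0 < x) =>
    (Real.differentiableAt_Gamma fun m hm => by linarith [hm ▸ hx, (m.cast_nonneg : (0:ℝ) ≤ m)]).log
      (Real.Gamma_pos_of_pos hx).ne'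

theorem MonotoneOn.monotone_of_rightInverse {α β : Type*} [LinearOrder α] [PartialOrder β]
    {f : α → β} {g : β → α} {s : Set α} (hf : MonotoneOn f s) (hgs : ∀ y, g y ∈ s)
    (hfg : ∀ y, f (g y) = y) : Monotone g := by
  intro a b hab
  by_contra! h
  have hba : b ≤ a := by simpa only [hfg] using hf (hgs b) (hgs a) h.le
  exact h.ne (congrArg g (le_antisymm hab hba)).symm

section Independence

variable {Ω β γ : Type*} [MeasurableSpace β] [MeasurableSpace γ]

theorem ProbabilityTheory.IndepFun.lintegral_comp_prodMk [MeasurableSpace Ω] {P : Measure Ω}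
    [IsFiniteMeasure P] {Y : Ω → β} {Z : Ω → γ} (hYZ : IndepFun Y Z P) (hY : Measurable Y)
    (hZ : Measurable Z) {f : β × γ → ℝ≥0∞} (hf : Measurable f) :
    ∫⁻ ω, f (Y ω, Z ω) ∂P = ∫⁻ ω, ∫⁻ z, f (Y ω, z) ∂(P.map Z) ∂P := by
  rw [← lintegral_map hf (hY.prodMk hZ),
    (indepFun_iff_map_prod_eq_prod_map_map hY.aemeasurable hZ.aemeasurable).mp hYZ,
    lintegral_prod _ hf.aemeasurable, lintegral_map hf.lintegral_prod_right' hY]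

theorem ProbabilityTheory.Indep.lintegral_mul_comp_eq {m : MeasurableSpace Ω}
    [mΩ : MeasurableSpace Ω] {P : Measure Ω} [IsFiniteMeasure P] {Z : Ω → γ} (hm : m ≤ mΩ)
    (hZ : Measurable Z) (hind : Indep m (MeasurableSpace.comap Z inferInstance) P)
    {g : Ω → ℝ≥0∞} (hg : Measurable[m] g) {θ : Ω → β} (hθ : Measurable[m] θ)
    {r : β → γ → ℝ≥0∞} (hr : Measurable (Function.uncurry r))
    (hr_one : ∀ ω, ∫⁻ z, r (θ ω) z ∂(P.map Z) = 1) :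
    ∫⁻ ω, g ω * r (θ ω) (Z ω) ∂P = ∫⁻ ω, g ω ∂P := by
  have hY : Measurable[m] fun ω => (g ω, θ ω) := hg.prodMk hθ
  have hYZ : IndepFun (fun ω => (g ω, θ ω)) Z P :=
    (IndepFun_iff_Indep _ _ _).mpr (indep_of_indep_of_le_left hind hY.comap_le)
  have hf : Measurable fun q : (ℝ≥0∞ × β) × γ => q.1.1 * r q.1.2 q.2 :=
    measurable_fst.fst.mul (hr.comp (measurable_fst.snd.prodMk measurable_snd))
  rw [hYZ.lintegral_comp_prodMk (hY.mono hm le_rfl) hZ hf]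
  refine lintegral_congr fun ω => ?_
  rw [lintegral_const_mul _ hr.of_uncurry_left, hr_one, mul_one]

end Independence

section FirstPassage

def firstPassage (r : ℕ → ℝ) (A : ℝ) : ℝ≥0∞ := ⨅ n ∈ {n : ℕ | 1 ≤ n ∧ A ≤ r n}, (n : ℝ≥0∞)

variable {r : ℕ → ℝ} {A : ℝ}

theorem natCast_le_firstPassage_iff {m : ℕ} :
    (m : ℝ≥0∞) ≤ firstPassage r A ↔ ∀ j, 1 ≤ j → j < m → r j < A := by
  simp only [firstPassage, le_iInf_iff, Set.mem_ofPred_eq, Nat.cast_le, and_imp]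
  constructor
  · intro h j hj hjm
    by_contra! hA
    exact absurd (h j hj hA) (not_le.mpr hjm)
  · intro h n hn hA
    by_contra! hnm
    exact absurd hA (not_le.mpr (h n hn hnm))

theorem exists_eq_firstPassage (h : firstPassage r A ≠ ⊤) :
    ∃ n : ℕ, firstPassage r A = n ∧ A ≤ r n := by
  have hS : {n : ℕ | 1 ≤ n ∧ A ≤ r n}.Nonempty := by
    by_contra hS
    simp [firstPassage, Set.not_nonempty_iff_eq_empty.mp hS] at h
  refine ⟨sInf {n : ℕ | 1 ≤ n ∧ A ≤ r n}, le_antisymm (iInf₂_le _ (Nat.sInf_mem hS))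
    (le_iInf₂ fun n hn => Nat.cast_le.mpr (Nat.sInf_le hn)), (Nat.sInf_mem hS).2⟩

theorem measurable_firstPassage {Ω : Type*} [MeasurableSpace Ω] {u : ℕ → Ω → ℝ}
    (hu : ∀ n, Measurable (u n)) : Measurable fun ω => firstPassage (fun n => u n ω) A := by
  simp only [firstPassage, Set.mem_ofPred_eq, iInf_eq_if]
  refine Measurable.iInf fun n => Measurable.ite ?_ measurable_const measurable_const
  exact (MeasurableSet.const _).inter (measurableSet_le measurable_const (hu n))

end FirstPassage

section OptionalStopping

variable {Ω : Type*} [MeasurableSpace Ω] {P : Measure Ω}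

theorem sum_range_ite_natCast_succ_le (c : ℝ≥0∞) (n : ℕ) :
    ∑ m ∈ Finset.range n, (if ((m + 1 : ℕ) : ℝ≥0∞) ≤ c then 1 else 0) ≤ c := by
  induction n with
  | zero => simp
  | succ n ih =>
    rw [Finset.sum_range_succ]
    split_ifs with h
    · calc _ ≤ ∑ _m ∈ Finset.range n, (1 : ℝ≥0∞) + 1 := by
            gcongr with m; split_ifs <;> simp
        _ = ((n + 1 : ℕ) : ℝ≥0∞) := by simp
        _ ≤ c := h
    · simpa using ih

theorem sum_range_measure_succ_le_lintegral {N : Ω → ℝ≥0∞} (hN : Measurable N) (n : ℕ) :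
    ∑ m ∈ Finset.range n, P {ω | ((m + 1 : ℕ) : ℝ≥0∞) ≤ N ω} ≤ ∫⁻ ω, N ω ∂P := by
  have hD : ∀ m : ℕ, MeasurableSet {ω | ((m + 1 : ℕ) : ℝ≥0∞) ≤ N ω} :=
    fun m => measurableSet_le measurable_const hN
  calc ∑ m ∈ Finset.range n, P {ω | ((m + 1 : ℕ) : ℝ≥0∞) ≤ N ω}
      = ∫⁻ ω, ∑ m ∈ Finset.range n, {ω | ((m + 1 : ℕ) : ℝ≥0∞) ≤ N ω}.indicator 1 ω ∂P := by
        rw [lintegral_finsetSum _ fun m _ => measurable_one.indicator (hD m)]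
        simp only [lintegral_indicator_one (hD _)]
    _ ≤ ∫⁻ ω, N ω ∂P := lintegral_mono fun ω => by
        simpa only [Set.indicator_apply, Set.mem_ofPred_eq, Pi.one_apply] using
          sum_range_ite_natCast_succ_le (N ω) n

theorem setLIntegral_succ_add_mul_measure_le {R : ℕ → Ω → ℝ≥0∞} {N : Ω → ℝ≥0∞} {a : ℝ≥0∞}
    (hN : Measurable N) {s : ℕ}
    (hstep : ∫⁻ ω in {ω | ((s + 1 : ℕ) : ℝ≥0∞) ≤ N ω}, R (s + 1) ω ∂P =
      ∫⁻ ω in {ω | ((s + 1 : ℕ) : ℝ≥0∞) ≤ N ω}, R s ω ∂P + P {ω | ((s + 1 : ℕ) : ℝ≥0∞) ≤ N ω})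
    (hstop : ∀ ω, N ω = s → a ≤ R s ω) :
    ∫⁻ ω in {ω | ((s + 1 : ℕ) : ℝ≥0∞) ≤ N ω}, R (s + 1) ω ∂P + a * P {ω | N ω = s} ≤
      ∫⁻ ω in {ω | (s : ℝ≥0∞) ≤ N ω}, R s ω ∂P + P {ω | ((s + 1 : ℕ) : ℝ≥0∞) ≤ N ω} := by
  have hE : MeasurableSet {ω | N ω = s} := hN (measurableSet_singleton _)
  have hdisj : Disjoint {ω | ((s + 1 : ℕ) : ℝ≥0∞) ≤ N ω} {ω | N ω = s} :=
    Set.disjoint_left.mpr fun ω (h₁ : ((s + 1 : ℕ) : ℝ≥0∞) ≤ N ω) (h₂ : N ω = s) =>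
      (ENNReal.lt_add_right (ENNReal.natCast_ne_top s) one_ne_zero).not_ge (by simpa [h₂] using h₁)
  have hsub : {ω | ((s + 1 : ℕ) : ℝ≥0∞) ≤ N ω} ∪ {ω | N ω = s} ⊆ {ω | (s : ℝ≥0∞) ≤ N ω} :=
    Set.union_subset (fun ω (h : ((s + 1 : ℕ) : ℝ≥0∞) ≤ N ω) => (Nat.cast_le.mpr s.le_succ).trans h)
      fun ω (h : N ω = s) => h.symm.le
  calc ∫⁻ ω in {ω | ((s + 1 : ℕ) : ℝ≥0∞) ≤ N ω}, R (s + 1) ω ∂P + a * P {ω | N ω = s}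
      = ∫⁻ ω in {ω | ((s + 1 : ℕ) : ℝ≥0∞) ≤ N ω}, R s ω ∂P + ∫⁻ _ in {ω | N ω = s}, a ∂P +
          P {ω | ((s + 1 : ℕ) : ℝ≥0∞) ≤ N ω} := by
        rw [hstep, setLIntegral_const]; ring
    _ ≤ ∫⁻ ω in {ω | ((s + 1 : ℕ) : ℝ≥0∞) ≤ N ω}, R s ω ∂P + ∫⁻ ω in {ω | N ω = s}, R s ω ∂P +
          P {ω | ((s + 1 : ℕ) : ℝ≥0∞) ≤ N ω} := by
        gcongr 2
        exact setLIntegral_mono' hE hstop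
    _ = ∫⁻ ω in {ω | ((s + 1 : ℕ) : ℝ≥0∞) ≤ N ω} ∪ {ω | N ω = s}, R s ω ∂P +
          P {ω | ((s + 1 : ℕ) : ℝ≥0∞) ≤ N ω} := by
        rw [lintegral_union hE hdisj]
    _ ≤ _ := by gcongr

theorem mul_sum_measure_eq_le_lintegral {R : ℕ → Ω → ℝ≥0∞} {N : Ω → ℝ≥0∞} {a : ℝ≥0∞}
    (hN : Measurable N) (hR₀ : ∀ ω, R 0 ω = 0)
    (hstep : ∀ s : ℕ, ∫⁻ ω in {ω | ((s + 1 : ℕ) : ℝ≥0∞) ≤ N ω}, R (s + 1) ω ∂P =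
      ∫⁻ ω in {ω | ((s + 1 : ℕ) : ℝ≥0∞) ≤ N ω}, R s ω ∂P + P {ω | ((s + 1 : ℕ) : ℝ≥0∞) ≤ N ω})
    (hstop : ∀ (s : ℕ) ω, N ω = s → a ≤ R s ω) (n : ℕ) :
    a * ∑ m ∈ Finset.range n, P {ω | N ω = m} ≤ ∫⁻ ω, N ω ∂P := by
  have hsum : ∀ n : ℕ, ∫⁻ ω in {ω | (n : ℝ≥0∞) ≤ N ω}, R n ω ∂P +
      a * ∑ m ∈ Finset.range n, P {ω | N ω = m} ≤
      ∑ m ∈ Finset.range n, P {ω | ((m + 1 : ℕ) : ℝ≥0∞) ≤ N ω} := by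
    intro n
    induction n with
    | zero => simp [hR₀]
    | succ n ih =>
      rw [Finset.sum_range_succ, Finset.sum_range_succ, mul_add, ← add_assoc, add_right_comm]
      calc _ ≤ ∫⁻ ω in {ω | (n : ℝ≥0∞) ≤ N ω}, R n ω ∂P +
            P {ω | ((n + 1 : ℕ) : ℝ≥0∞) ≤ N ω} + a * ∑ m ∈ Finset.range n, P {ω | N ω = m} := by
            gcongr ?_ + _
            exact setLIntegral_succ_add_mul_measure_le hN (hstep n) (hstop n)
        _ ≤ _ := by rw [add_right_comm]; gcongr
  exact le_add_self.trans ((hsum n).trans (sum_range_measure_succ_le_lintegral hN n))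

-- `hstep` is the martingale property of `R n - n`, tested on the events `{s + 1 ≤ N}`.
theorem le_lintegral_of_setLIntegral_succ_eq [IsProbabilityMeasure P]
    {R : ℕ → Ω → ℝ≥0∞} {N : Ω → ℝ≥0∞} {a : ℝ≥0∞} (hN : Measurable N) (hR₀ : ∀ ω, R 0 ω = 0)
    (hstep : ∀ s : ℕ, ∫⁻ ω in {ω | ((s + 1 : ℕ) : ℝ≥0∞) ≤ N ω}, R (s + 1) ω ∂P =
      ∫⁻ ω in {ω | ((s + 1 : ℕ) : ℝ≥0∞) ≤ N ω}, R s ω ∂P + P {ω | ((s + 1 : ℕ) : ℝ≥0∞) ≤ N ω})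
    (hstop : ∀ ω, N ω ≠ ⊤ → ∃ n : ℕ, N ω = n ∧ a ≤ R n ω) :
    a ≤ ∫⁻ ω, N ω ∂P := by
  by_cases htop : P {ω | N ω = ⊤} = 0
  swap
  · rw [lintegral_eq_top_of_measure_eq_top_ne_zero hN.aemeasurable htop]
    exact le_top
  have hE : ∀ m : ℕ, MeasurableSet {ω | N ω = m} := fun m => hN (measurableSet_singleton _)
  have hdisj : Pairwise (Function.onFun Disjoint fun m : ℕ => {ω | N ω = m}) := fun i j hij =>
    Set.disjoint_left.mpr fun ω (hi : N ω = i) (hj : N ω = j) =>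
      hij (Nat.cast_injective (hi.symm.trans hj))
  have hcover : P (⋃ m : ℕ, {ω | N ω = m}) = 1 := by
    rw [← prob_compl_eq_zero_iff (MeasurableSet.iUnion hE)]
    refine measure_mono_null (fun ω hω => ?_) htop
    by_contra h
    obtain ⟨n, hn, -⟩ := hstop ω h
    exact hω (Set.mem_iUnion.mpr ⟨n, hn⟩)
  have hstop' : ∀ (s : ℕ) ω, N ω = s → a ≤ R s ω := by
    intro s ω hω
    obtain ⟨n, hn, ha⟩ := hstop ω (hω ▸ ENNReal.natCast_ne_top s)
    rwa [Nat.cast_injective (hω.symm.trans hn)]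
  calc a = a * ∑' m : ℕ, P {ω | N ω = m} := by rw [← measure_iUnion hdisj hE, hcover, mul_one]
    _ = ⨆ n, a * ∑ m ∈ Finset.range n, P {ω | N ω = m} := by
        rw [ENNReal.tsum_eq_iSup_nat, ENNReal.mul_iSup]
    _ ≤ ∫⁻ ω, N ω ∂P := iSup_le (mul_sum_measure_eq_le_lintegral hN hR₀ hstep hstop')

end OptionalStopping

namespace ShiryaevRoberts

variable {Ω : Type*}

abbrev past (X : ℕ → Ω → ℝ) (n : ℕ) : MeasurableSpace Ω :=
  ⨆ i ∈ Set.Iio n, MeasurableSpace.comap (X i) inferInstance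

def likelihoodRatio (θ₀ : ℝ) (θ : ℕ → ℕ → Ω → ℝ) (X : ℕ → Ω → ℝ) (k n : ℕ) (ω : Ω) : ℝ :=
  ∏ i ∈ Finset.Icc k n, gamRatio θ₀ (θ k i ω) (X i ω)

def statistic (θ₀ : ℝ) (θ : ℕ → ℕ → Ω → ℝ) (X : ℕ → Ω → ℝ) (n : ℕ) (ω : Ω) : ℝ :=
  ∑ k ∈ Finset.Icc 1 n, likelihoodRatio θ₀ θ X k n ω

variable {X : ℕ → Ω → ℝ} {θ₀ : ℝ} {θ : ℕ → ℕ → Ω → ℝ}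

theorem measurable_past {i n : ℕ} (h : i < n) : Measurable[past X n] (X i) :=
  Measurable.of_comap_le <| le_iSup₂ (f := fun j (_ : j ∈ Set.Iio n) =>
    MeasurableSpace.comap (X j) inferInstance) i h

theorem past_mono : Monotone (past X) := fun _ _ h => biSup_mono fun _ hi => lt_of_lt_of_le hi h

theorem likelihoodRatio_nonneg (hθ₀ : 0 < θ₀) (hθpos : ∀ k i ω, k ≤ i → 0 < θ k i ω)
    (k n : ℕ) (ω : Ω) : 0 ≤ likelihoodRatio θ₀ θ X k n ω :=
  Finset.prod_nonneg fun i hi => gamRatio_nonneg hθ₀ (hθpos k i ω (Finset.mem_Icc.mp hi).1) _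

theorem measurable_likelihoodRatio (hθ : ∀ k i, k ≤ i → Measurable[past X i] (θ k i))
    (k n : ℕ) : Measurable[past X (n + 1)] (likelihoodRatio θ₀ θ X k n) := by
  refine Finset.measurable_prod _ fun i hi => ?_
  obtain ⟨hki, hin⟩ := Finset.mem_Icc.mp hi
  exact (measurable_gamRatio θ₀).comp
    (((hθ k i hki).mono (past_mono (by omega)) le_rfl).prodMk (measurable_past (by omega)))

theorem measurable_statistic (hθ : ∀ k i, k ≤ i → Measurable[past X i] (θ k i)) (n : ℕ) :
    Measurable[past X (n + 1)] (statistic θ₀ θ X n) :=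
  Finset.measurable_sum _ fun k _ => measurable_likelihoodRatio hθ k n

theorem measurableSet_natCast_le_firstPassage
    (hθ : ∀ k i, k ≤ i → Measurable[past X i] (θ k i)) (A : ℝ) (m : ℕ) :
    MeasurableSet[past X m]
      {ω | (m : ℝ≥0∞) ≤ firstPassage (fun n => statistic θ₀ θ X n ω) A} := by
  simp only [natCast_le_firstPassage_iff, Set.ofPred_forall]
  exact MeasurableSet.iInter fun j => MeasurableSet.iInter fun _ => MeasurableSet.iInter fun hj =>
    measurableSet_lt ((measurable_statistic hθ j).mono (past_mono hj) le_rfl) measurable_const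

theorem likelihoodRatio_of_lt {k n : ℕ} (h : n < k) (ω : Ω) : likelihoodRatio θ₀ θ X k n ω = 1 := by
  rw [likelihoodRatio, Finset.Icc_eq_empty (by omega), Finset.prod_empty]

theorem ofReal_statistic_succ (hθ₀ : 0 < θ₀) (hθpos : ∀ k i ω, k ≤ i → 0 < θ k i ω) (s : ℕ)
    (ω : Ω) : ENNReal.ofReal (statistic θ₀ θ X (s + 1) ω) =
      ∑ k ∈ Finset.Icc 1 (s + 1), ENNReal.ofReal (likelihoodRatio θ₀ θ X k s ω) *
        ENNReal.ofReal (gamRatio θ₀ (θ k (s + 1) ω) (X (s + 1) ω)) := by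
  rw [statistic, ENNReal.ofReal_sum_of_nonneg fun k _ => likelihoodRatio_nonneg hθ₀ hθpos k _ ω]
  refine Finset.sum_congr rfl fun k hk => ?_
  rw [likelihoodRatio, Finset.prod_Icc_succ_top (Finset.mem_Icc.mp hk).2, ← likelihoodRatio,
    ENNReal.ofReal_mul (likelihoodRatio_nonneg hθ₀ hθpos k s ω)]

theorem ofReal_statistic_add_one (hθ₀ : 0 < θ₀) (hθpos : ∀ k i ω, k ≤ i → 0 < θ k i ω) (s : ℕ)
    (ω : Ω) : ENNReal.ofReal (statistic θ₀ θ X s ω) + 1 =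
      ∑ k ∈ Finset.Icc 1 (s + 1), ENNReal.ofReal (likelihoodRatio θ₀ θ X k s ω) := by
  rw [Finset.sum_Icc_succ_top (by omega), statistic,
    ENNReal.ofReal_sum_of_nonneg fun k _ => likelihoodRatio_nonneg hθ₀ hθpos k s ω,
    likelihoodRatio_of_lt s.lt_succ_self, ENNReal.ofReal_one]

theorem measurable_past_of_mle {ψinv : ℝ → ℝ} (hψ : Measurable ψinv)
    (hθkk : ∀ k ω, θ k k ω = θ₀)
    (hθnk : ∀ k n ω, k < n →
      θ k n ω = ψinv ((∑ i ∈ Finset.Ico k n, Real.log (X i ω)) / ((n : ℝ) - (k : ℝ))))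
    (k i : ℕ) (hki : k ≤ i) : Measurable[past X i] (θ k i) := by
  rcases hki.eq_or_lt with rfl | hlt
  · rw [show θ k k = fun _ => θ₀ from funext (hθkk k)]
    exact measurable_const
  · rw [show θ k i = _ from funext fun ω => hθnk k i ω hlt]
    exact hψ.comp ((Finset.measurable_sum _ fun j hj =>
      (measurable_past (Finset.mem_Ico.mp hj).2).log).div_const _)

variable [mΩ : MeasurableSpace Ω] {P : Measure Ω}

theorem past_le (hX : ∀ i, Measurable (X i)) (n : ℕ) : past X n ≤ mΩ :=
  iSup₂_le fun i _ => (hX i).comap_le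

theorem indep_past (hX : ∀ i, Measurable (X i)) (hindep : iIndepFun X P) (n : ℕ) :
    Indep (past X n) (MeasurableSpace.comap (X n) inferInstance) P := by
  simpa only [iSup_singleton] using indep_iSup_of_disjoint (fun i => (hX i).comap_le)
    hindep.iIndep (S := Set.Iio n) (T := {n}) (Set.disjoint_singleton_right.mpr (lt_irrefl n))

theorem setLIntegral_ofReal_likelihoodRatio_mul [IsProbabilityMeasure P]
    (hX : ∀ i, Measurable (X i)) (hindep : iIndepFun X P) (hθ₀ : 0 < θ₀)
    (hθ : ∀ k i, k ≤ i → Measurable[past X i] (θ k i)) (hθpos : ∀ k i ω, k ≤ i → 0 < θ k i ω)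
    {k s : ℕ} (hks : k ≤ s + 1) (hlaw : P.map (X (s + 1)) = gammaMeasure θ₀ 1)
    {S : Set Ω} (hS : MeasurableSet[past X (s + 1)] S) :
    ∫⁻ ω in S, ENNReal.ofReal (likelihoodRatio θ₀ θ X k s ω) *
        ENNReal.ofReal (gamRatio θ₀ (θ k (s + 1) ω) (X (s + 1) ω)) ∂P =
      ∫⁻ ω in S, ENNReal.ofReal (likelihoodRatio θ₀ θ X k s ω) ∂P := by
  have hS' := past_le hX _ _ hS
  rw [← lintegral_indicator hS', ← lintegral_indicator hS']
  simp_rw [Set.indicator_mul_left]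
  exact (indep_past hX hindep (s + 1)).lintegral_mul_comp_eq (past_le hX _) (hX _)
    ((measurable_likelihoodRatio hθ k s).ennreal_ofReal.indicator hS) (hθ k (s + 1) hks)
    (r := fun b x => ENNReal.ofReal (gamRatio θ₀ b x)) (measurable_gamRatio θ₀).ennreal_ofReal
    fun ω => by rw [hlaw]; exact lintegral_gamRatio hθ₀ (hθpos _ _ ω hks)

theorem setLIntegral_ofReal_statistic_succ [IsProbabilityMeasure P] (hX : ∀ i, Measurable (X i))
    (hindep : iIndepFun X P) (hθ₀ : 0 < θ₀) (hθ : ∀ k i, k ≤ i → Measurable[past X i] (θ k i))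
    (hθpos : ∀ k i ω, k ≤ i → 0 < θ k i ω) {s : ℕ} (hlaw : P.map (X (s + 1)) = gammaMeasure θ₀ 1)
    {S : Set Ω} (hS : MeasurableSet[past X (s + 1)] S) :
    ∫⁻ ω in S, ENNReal.ofReal (statistic θ₀ θ X (s + 1) ω) ∂P =
      ∫⁻ ω in S, ENNReal.ofReal (statistic θ₀ θ X s ω) ∂P + P S := by
  have hΛmeas : ∀ k, Measurable fun ω => ENNReal.ofReal (likelihoodRatio θ₀ θ X k s ω) :=
    fun k => ((measurable_likelihoodRatio hθ k s).mono (past_le hX _) le_rfl).ennreal_ofReal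
  have hρmeas : ∀ k ∈ Finset.Icc 1 (s + 1),
      Measurable fun ω => ENNReal.ofReal (gamRatio θ₀ (θ k (s + 1) ω) (X (s + 1) ω)) :=
    fun k hk => ((measurable_gamRatio θ₀).comp (((hθ k (s + 1) (Finset.mem_Icc.mp hk).2).mono
      (past_le hX _) le_rfl).prodMk (hX _))).ennreal_ofReal
  calc ∫⁻ ω in S, ENNReal.ofReal (statistic θ₀ θ X (s + 1) ω) ∂P
      = ∑ k ∈ Finset.Icc 1 (s + 1), ∫⁻ ω in S, ENNReal.ofReal (likelihoodRatio θ₀ θ X k s ω) *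
          ENNReal.ofReal (gamRatio θ₀ (θ k (s + 1) ω) (X (s + 1) ω)) ∂P := by
        simp_rw [ofReal_statistic_succ hθ₀ hθpos]
        exact lintegral_finsetSum _ fun k hk => (hΛmeas k).mul (hρmeas k hk)
    _ = ∑ k ∈ Finset.Icc 1 (s + 1), ∫⁻ ω in S, ENNReal.ofReal (likelihoodRatio θ₀ θ X k s ω) ∂P :=
        Finset.sum_congr rfl fun k hk => setLIntegral_ofReal_likelihoodRatio_mul hX hindep hθ₀ hθ
          hθpos (Finset.mem_Icc.mp hk).2 hlaw hS
    _ = ∫⁻ ω in S, ENNReal.ofReal (statistic θ₀ θ X s ω) ∂P + P S := by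
        rw [← lintegral_finsetSum _ fun k _ => hΛmeas k]
        simp_rw [← ofReal_statistic_add_one hθ₀ hθpos]
        rw [lintegral_add_right _ measurable_const, setLIntegral_one]

end ShiryaevRoberts

open ShiryaevRoberts in
theorem srrs_mle_arl_lower_bound_general
    {Ω : Type*} [MeasurableSpace Ω] (P : Measure Ω) [IsProbabilityMeasure P]
    (θ₀ : ℝ) (hθ₀ : 0 < θ₀)
    (X : ℕ → Ω → ℝ) (hXmeas : ∀ i, Measurable (X i))
    (hindep : iIndepFun X P)
    (hlaw : ∀ i, 1 ≤ i → Measure.map (X i) P = gammaMeasure θ₀ 1)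
    -- ψ is a strictly increasing bijection from (0,∞) onto ℝ with inverse ψ⁻¹
    (ψinv : ℝ → ℝ)
    (hψinv : ∀ y : ℝ, 0 < ψinv y ∧ digamma (ψinv y) = y)
    -- θ_{k,k} = θ₀ and θ_{n,k} = ψ⁻¹((Σ_{i=k}^{n−1} log X_i)/(n−k)) for n > k
    (θnk : ℕ → ℕ → Ω → ℝ)
    (hθkk : ∀ k ω, θnk k k ω = θ₀)
    (hθnk : ∀ k n ω, k < n →
      θnk k n ω = ψinv ((∑ i ∈ Finset.Ico k n, Real.log (X i ω)) / ((n : ℝ) - (k : ℝ))))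
    (Λ : ℕ → ℕ → Ω → ℝ)
    (hΛ : ∀ k n ω, Λ k n ω = ∏ i ∈ Finset.Icc k n, gam (θnk k i ω) (X i ω) / gam θ₀ (X i ω))
    (R : ℕ → Ω → ℝ) (hR : ∀ n ω, R n ω = ∑ k ∈ Finset.Icc 1 n, Λ k n ω)
    (A : ℝ)
    (N : Ω → ℝ≥0∞)
    (hN : ∀ ω, N ω = ⨅ n ∈ {n : ℕ | 1 ≤ n ∧ A ≤ R n ω}, (n : ℝ≥0∞)) :
    ENNReal.ofReal A ≤ ∫⁻ ω, N ω ∂P := by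
  have hψ : Measurable ψinv := (digamma_monotoneOn.monotone_of_rightInverse
    (fun y => (hψinv y).1) fun y => (hψinv y).2).measurable
  have hθ := measurable_past_of_mle hψ hθkk hθnk
  have hθpos : ∀ k i ω, k ≤ i → 0 < θnk k i ω := by
    intro k i ω hki
    rcases hki.eq_or_lt with rfl | hlt
    · exact (hθkk k ω).symm ▸ hθ₀
    · exact (hθnk k i ω hlt).symm ▸ (hψinv _).1
  obtain rfl : R = statistic θ₀ θnk X := by
    ext n ω
    simp only [hR, hΛ]
    rfl
  obtain rfl : N = fun ω => firstPassage (fun n => statistic θ₀ θnk X n ω) A := funext hN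
  refine le_lintegral_of_setLIntegral_succ_eq
    (R := fun n ω => ENNReal.ofReal (statistic θ₀ θnk X n ω))
    (measurable_firstPassage fun n => (measurable_statistic hθ n).mono (past_le hXmeas _) le_rfl)
    (fun ω => by simp only [statistic, Finset.Icc_eq_empty_of_lt one_pos, Finset.sum_empty,
      ENNReal.ofReal_zero])
    (fun s => setLIntegral_ofReal_statistic_succ hXmeas hindep hθ₀ hθ hθpos (hlaw _ s.succ_pos)
      (measurableSet_natCast_le_firstPassage (θ₀ := θ₀) hθ A (s + 1)))
    fun ω hω => ?_
  obtain ⟨n, hn, hAn⟩ := exists_eq_firstPassage hω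
  exact ⟨n, hn, ENNReal.ofReal_le_ofReal hAn⟩

/-- for the SRRS changepoint detection scheme based on the maximum
likelihood estimators, `E_∞ N_A ≥ A` for all `0 < A < ∞`. -/
theorem srrs_mle_arl_lower_bound
    {Ω : Type*} [MeasurableSpace Ω] (P : Measure Ω) [IsProbabilityMeasure P]
    (θ₀ : ℝ) (hθ₀ : 0 < θ₀)
    (X : ℕ → Ω → ℝ) (hXmeas : ∀ i, Measurable (X i))
    (hindep : iIndepFun X P)
    (hlaw : ∀ i, 1 ≤ i → Measure.map (X i) P = gammaMeasure θ₀ 1)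
    -- ψ is a strictly increasing bijection from (0,∞) onto ℝ with inverse ψ⁻¹
    (ψinv : ℝ → ℝ)
    (hψinv : ∀ y : ℝ, 0 < ψinv y ∧ digamma (ψinv y) = y)
    (hψinv' : ∀ x : ℝ, 0 < x → ψinv (digamma x) = x)
    -- θ_{k,k} = θ₀ and θ_{n,k} = ψ⁻¹((Σ_{i=k}^{n−1} log X_i)/(n−k)) for n > k
    (θnk : ℕ → ℕ → Ω → ℝ)
    (hθkk : ∀ k ω, θnk k k ω = θ₀)
    (hθnk : ∀ k n ω, k < n →
      θnk k n ω = ψinv ((∑ i ∈ Finset.Ico k n, Real.log (X i ω)) / ((n : ℝ) - (k : ℝ))))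
    (Λ : ℕ → ℕ → Ω → ℝ)
    (hΛ : ∀ k n ω, Λ k n ω = ∏ i ∈ Finset.Icc k n, gam (θnk k i ω) (X i ω) / gam θ₀ (X i ω))
    (R : ℕ → Ω → ℝ) (hR : ∀ n ω, R n ω = ∑ k ∈ Finset.Icc 1 n, Λ k n ω)
    (A : ℝ) (hA : 0 < A)
    (N : Ω → ℝ≥0∞)
    (hN : ∀ ω, N ω = ⨅ n ∈ {n : ℕ | 1 ≤ n ∧ A ≤ R n ω}, (n : ℝ≥0∞)) :
    ENNReal.ofReal A ≤ ∫⁻ ω, N ω ∂P :=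
  srrs_mle_arl_lower_bound_general P θ₀ hθ₀ X hXmeas hindep hlaw ψinv hψinv θnk hθkk hθnk Λ hΛ R hR
    A N hN
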